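/- (Geodesic convexity of the operator capacity objective.) Let A₁, …, A_m be n×n real matrices and define T(X) = Σⱼ Aⱼ·X·Aⱼᵀ; assume T is strictly positive, i.e., T(X) is positive definite whenever X is positive definite. Then the objective X ↦ log det(T(X)) − log det(X) of the operator capacity problem cap(T) = inf_{X ≻ 0} det(T(X))/det(X) is geodesically convex on the positive definite cone: for every n×n positive definite matrix P and every n×n symmetric matrix Q, the function t ↦ log det(T(√P · exp(t·Q) · √P)) − log det(√P · exp(t·Q) · √P) is convex on ℝ. -/

import Mathlib

/-!
Write `T(γ(t)) = Σⱼ Bⱼᵀ exp(tQ) Bⱼ` with `Bⱼ = √P Aⱼᵀ`. Stacking the blocks `exp(sQ/2) Bⱼ` into one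
tall matrix `C(s)` gives `C(s)ᵀ C(t) = T(γ((s+t)/2))`, so the determinantal Cauchy–Schwarz
inequality `det(XᵀY)² ≤ det(XᵀX) det(YᵀY)` makes `t ↦ log det T(γ(t))` midpoint convex, hence convex
by continuity. That inequality is the Schur complement of the positive semidefinite Gram matrix of
`[X Y]` combined with monotonicity of `det` in the Loewner order. The subtracted term is affine:
`log det γ(t) = log det P + t tr Q`, because `det exp(tQ) = exp(t tr Q)`.
-/

open Matrix

open scoped ComplexOrder in
/-- The square root of a positive semidefinite matrix, as defined in Mathlib (Dec 2024). -/
noncomputable def Matrix.PosSemidef.sqrt {𝕜 : Type*} [RCLike 𝕜] {n : Type*} [Fintype n]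
    [DecidableEq n] {A : Matrix n n 𝕜} (hA : A.PosSemidef) : Matrix n n 𝕜 :=
  hA.1.eigenvectorUnitary.1 * diagonal ((↑) ∘ (√·) ∘ hA.1.eigenvalues) *
    (star hA.1.eigenvectorUnitary : Matrix n n 𝕜)

namespace Matrix.PosSemidef
open scoped ComplexOrder
variable {𝕜 : Type*} [RCLike 𝕜] {k : Type*} [Fintype k] [DecidableEq k] {A : Matrix k k 𝕜}

lemma sqrt_eq_conjStarAlgAut (hA : A.PosSemidef) :
    hA.sqrt = Unitary.conjStarAlgAut 𝕜 _ hA.1.eigenvectorUnitary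
      (diagonal ((↑) ∘ (√·) ∘ hA.1.eigenvalues)) := by
  rw [Unitary.conjStarAlgAut_apply]; rfl

lemma posSemidef_sqrt (hA : A.PosSemidef) : hA.sqrt.PosSemidef := by
  rw [sqrt_eq_conjStarAlgAut, Unitary.conjStarAlgAut_apply,
    IsUnit.posSemidef_star_right_conjugate_iff Unitary.isUnit_coe]
  exact PosSemidef.diagonal fun i => by simp

lemma sqrt_mul_self (hA : A.PosSemidef) : hA.sqrt * hA.sqrt = A := by
  conv_rhs => rw [hA.1.spectral_theorem]
  rw [sqrt_eq_conjStarAlgAut, ← map_mul, diagonal_mul_diagonal]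
  congr 2
  funext i
  simp [← RCLike.ofReal_mul, Real.mul_self_sqrt (hA.eigenvalues_nonneg i)]

end Matrix.PosSemidef

namespace Matrix
variable {k : Type*} [Fintype k] [DecidableEq k]

lemma PosSemidef.one_le_det_one_add {W : Matrix k k ℝ} (hW : W.PosSemidef) :
    1 ≤ (1 + W).det := by
  have hH : (1 + W).IsHermitian := isHermitian_one.add hW.1
  rw [hH.det_eq_prod_eigenvalues]
  refine Finset.one_le_prod fun i _ => ?_
  -- For a unit eigenvector `v`, the eigenvalue is `star v ⬝ᵥ (1 + W) *ᵥ v = 1 + star v ⬝ᵥ W *ᵥ v`.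
  have hv : star ⇑(hH.eigenvectorBasis i) ⬝ᵥ ⇑(hH.eigenvectorBasis i) = 1 := by
    rw [dotProduct_comm, ← EuclideanSpace.inner_eq_star_dotProduct]
    simp [hH.eigenvectorBasis.orthonormal.1 i]
  rw [RCLike.ofReal_real_eq_id, id, hH.eigenvalues_eq, add_mulVec, one_mulVec, dotProduct_add, hv]
  simpa using hW.dotProduct_mulVec_nonneg _

lemma PosSemidef.det_le_of_posSemidef_sub {A B : Matrix k k ℝ} (hA : A.PosSemidef)
    (hBA : (B - A).PosSemidef) : A.det ≤ B.det := by
  by_cases hA0 : A.det = 0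
  · simpa [hA0] using (hA.add hBA).det_nonneg
  set R := hA.sqrt
  have hRR : R * R = A := hA.sqrt_mul_self
  have hR : IsUnit R.det := by
    rw [isUnit_iff_ne_zero]
    rintro h
    exact hA0 (by rw [← hRR, det_mul, h, zero_mul])
  have hRinv : (R⁻¹)ᴴ = R⁻¹ := by rw [conjTranspose_nonsing_inv, hA.posSemidef_sqrt.1.eq]
  have hW : (R⁻¹ * (B - A) * R⁻¹).PosSemidef := by
    simpa only [hRinv] using hBA.conjTranspose_mul_mul_same R⁻¹
  have hB : B = R * (1 + R⁻¹ * (B - A) * R⁻¹) * R := by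
    rw [mul_add, add_mul, mul_one, hRR, ← mul_assoc, ← mul_assoc, mul_nonsing_inv _ hR, one_mul,
      mul_assoc, nonsing_inv_mul _ hR, mul_one, add_sub_cancel]
  calc A.det = R.det * R.det * 1 := by rw [mul_one, ← det_mul, hRR]
    _ ≤ R.det * R.det * (1 + R⁻¹ * (B - A) * R⁻¹).det :=
      mul_le_mul_of_nonneg_left hW.one_le_det_one_add (mul_self_nonneg _)
    _ = B.det := by
      conv_rhs => rw [hB, det_mul, det_mul]
      ring

lemma det_transpose_mul_sq_le {N : Type*} [Fintype N] (X Y : Matrix N k ℝ)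
    (hX : (Xᵀ * X).PosDef) :
    (Xᵀ * Y).det ^ 2 ≤ (Xᵀ * X).det * (Yᵀ * Y).det := by
  have hGram : (fromBlocks (Xᵀ * X) (Xᵀ * Y) (Xᵀ * Y)ᴴ (Yᵀ * Y)).PosSemidef := by
    have := posSemidef_conjTranspose_mul_self (fromCols X Y)
    simpa [conjTranspose_eq_transpose_of_trivial, transpose_fromCols, fromRows_mul_fromCols]
      using this
  have := hX.isUnit.invertible
  have hSchur := (PosDef.fromBlocks₁₁ (Xᵀ * Y) (Yᵀ * Y) hX).mp hGram
  have hle :=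
    (hX.posSemidef.inv.conjTranspose_mul_mul_same (Xᵀ * Y)).det_le_of_posSemidef_sub hSchur
  have hdet : ((Xᵀ * Y)ᴴ * (Xᵀ * X)⁻¹ * (Xᵀ * Y)).det = (Xᵀ * Y).det ^ 2 / (Xᵀ * X).det := by
    rw [det_mul, det_mul, det_conjTranspose, det_nonsing_inv, Ring.inverse_eq_inv']
    simp only [star_trivial]
    ring
  rw [hdet, div_le_iff₀' hX.det_pos] at hle
  exact hle

lemma IsHermitian.det_exp {A : Matrix k k ℝ} (hA : A.IsHermitian) :
    (NormedSpace.exp A).det = Real.exp A.trace := by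
  set U := (hA.eigenvectorUnitary : Matrix k k ℝ)
  have hU : IsUnit U := Unitary.isUnit_coe
  have hspec : A = U * diagonal hA.eigenvalues * U⁻¹ := by
    rw [inv_eq_left_inv (Unitary.coe_star_mul_self hA.eigenvectorUnitary)]
    simpa [RCLike.ofReal_real_eq_id] using hA.spectral_theorem
  conv_lhs => rw [hspec, exp_conj _ _ hU, det_conj hU, exp_diagonal, det_diagonal]
  simp [hA.trace_eq_sum_eigenvalues, ← Real.exp_eq_exp_ℝ, Real.exp_sum]

lemma IsHermitian.posDef_exp {A : Matrix k k ℝ} (hA : A.IsHermitian) :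
    (NormedSpace.exp A).PosDef := by
  have hhalf : NormedSpace.exp A = (NormedSpace.exp ((1 / 2 : ℝ) • A))ᴴ
      * NormedSpace.exp ((1 / 2 : ℝ) • A) := by
    rw [← exp_conjTranspose, conjTranspose_smul, hA.eq, star_trivial, ← exp_add_of_commute _ _
      (Commute.refl _), ← add_smul]
    norm_num
  rw [hhalf]
  exact PosDef.conjTranspose_mul_self _ (mulVec_injective_of_isUnit (isUnit_exp _))

lemma exp_smul_mul_exp_smul (Q : Matrix k k ℝ) (s t : ℝ) :
    NormedSpace.exp (s • Q) * NormedSpace.exp (t • Q) = NormedSpace.exp ((s + t) • Q) := by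
  rw [add_smul, exp_add_of_commute _ _ ((Commute.refl Q).smul_left s |>.smul_right t)]

lemma continuous_exp_smul (Q : Matrix k k ℝ) :
    Continuous fun t : ℝ => NormedSpace.exp (t • Q) := by
  open scoped Norms.Operator in
  exact NormedSpace.exp_continuous.comp (continuous_id.smul continuous_const)

def stackRows {ι m n R : Type*} (F : ι → Matrix m n R) : Matrix (ι × m) n R :=
  of fun p => F p.1 p.2

lemma transpose_stackRows_mul_stackRows {ι m n R : Type*} [Fintype ι] [Fintype m] [Mul R]
    [AddCommMonoid R] (F G : ι → Matrix m n R) :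
    (stackRows F)ᵀ * stackRows G = ∑ j, (F j)ᵀ * G j := by
  ext a b
  simp [stackRows, mul_apply, sum_apply, Fintype.sum_prod_type]

end Matrix

open Set

lemma nonpos_of_midpoint_le_of_continuous {g : ℝ → ℝ} (hc : Continuous g)
    (hmid : ∀ a b, g ((a + b) / 2) ≤ (g a + g b) / 2) (h0 : g 0 ≤ 0) (h1 : g 1 ≤ 0) :
    ∀ c ∈ Icc (0 : ℝ) 1, g c ≤ 0 := by
  by_contra! ⟨c, hc01, hgc⟩
  obtain ⟨c₁, hc₁, hmax⟩ :=
    isCompact_Icc.exists_isMaxOn (nonempty_Icc.2 zero_le_one) hc.continuousOn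
  -- The leftmost maximiser `c₀` of `g` on `[0, 1]` is interior and `g (c₀ - h) < g c₀`, which
  -- midpoint convexity forbids.
  obtain ⟨c₀, ⟨hc₀, hgc₀⟩, hleast⟩ := ((isCompact_Icc.inter_right
    (isClosed_eq hc continuous_const)).exists_isLeast ⟨c₁, hc₁, rfl⟩ :
    ∃ c₀, IsLeast (Icc (0 : ℝ) 1 ∩ {d | g d = g c₁}) c₀)
  have hpos : 0 < g c₀ := hgc₀ ▸ hgc.trans_le (hmax hc01)
  have hc₀_pos : 0 < c₀ := lt_of_le_of_ne hc₀.1 (by rintro rfl; linarith)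
  have hc₀_lt_one : c₀ < 1 := lt_of_le_of_ne hc₀.2 (by rintro rfl; linarith)
  set h := min c₀ (1 - c₀)
  have hh : 0 < h := lt_min hc₀_pos (by linarith)
  have hleft : c₀ - h ∈ Icc (0 : ℝ) 1 := ⟨by linarith [min_le_left c₀ (1 - c₀)], by linarith⟩
  have hright : c₀ + h ∈ Icc (0 : ℝ) 1 := ⟨by linarith, by linarith [min_le_right c₀ (1 - c₀)]⟩
  have hlt : g (c₀ - h) < g c₀ := by
    refine lt_of_le_of_ne (hgc₀ ▸ hmax hleft) fun heq => ?_
    have := hleast ⟨hleft, heq.trans hgc₀⟩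
    linarith
  have hle : g (c₀ + h) ≤ g c₀ := hgc₀ ▸ hmax hright
  have := hmid (c₀ - h) (c₀ + h)
  rw [show (c₀ - h + (c₀ + h)) / 2 = c₀ by ring] at this
  linarith

theorem convexOn_univ_of_midpoint_le_of_continuous {f : ℝ → ℝ} (hc : Continuous f)
    (hmid : ∀ x y, f ((x + y) / 2) ≤ (f x + f y) / 2) : ConvexOn ℝ univ f := by
  refine ⟨convex_univ, fun x _ y _ a b ha _ hab => ?_⟩
  obtain rfl : b = 1 - a := by linarith
  let g c := f (c * x + (1 - c) * y) - (c * f x + (1 - c) * f y)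
  have hg : ∀ c d, g ((c + d) / 2) ≤ (g c + g d) / 2 := fun c d => by
    have := hmid (c * x + (1 - c) * y) (d * x + (1 - d) * y)
    simp only [g]
    rw [show (c + d) / 2 * x + (1 - (c + d) / 2) * y
      = (c * x + (1 - c) * y + (d * x + (1 - d) * y)) / 2 by ring]
    linarith
  have := nonpos_of_midpoint_le_of_continuous (g := g) (by fun_prop) hg (by simp [g])
    (by simp [g]) a ⟨ha, by linarith⟩
  simp only [smul_eq_mul, g] at this ⊢
  linarith

theorem convexOn_log_det_sum_transpose_mul_exp_smul_mul {ι k l : Type*} [Fintype ι] [Fintype k]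
    [DecidableEq k] [Fintype l] [DecidableEq l] (B : ι → Matrix k l ℝ) {Q : Matrix k k ℝ}
    (hQ : Q.IsSymm)
    (hpd : ∀ u : ℝ, (∑ j, (B j)ᵀ * NormedSpace.exp (u • Q) * B j).PosDef) :
    ConvexOn ℝ univ fun u : ℝ => Real.log (∑ j, (B j)ᵀ * NormedSpace.exp (u • Q) * B j).det := by
  set M := fun u : ℝ => ∑ j, (B j)ᵀ * NormedSpace.exp (u • Q) * B j
  set C := fun u : ℝ => stackRows fun j => NormedSpace.exp ((u / 2) • Q) * B j
  have hgram : ∀ s t, (C s)ᵀ * C t = M ((s + t) / 2) := fun s t => by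
    have hsymm : (NormedSpace.exp ((s / 2) • Q))ᵀ = NormedSpace.exp ((s / 2) • Q) :=
      (hQ.smul _).exp.eq
    simp only [C, M, transpose_stackRows_mul_stackRows, transpose_mul, hsymm]
    refine Finset.sum_congr rfl fun j _ => ?_
    rw [← Matrix.mul_assoc, Matrix.mul_assoc (B j)ᵀ, exp_smul_mul_exp_smul, ← add_div]
  have hdiag : ∀ s, (C s)ᵀ * C s = M s := fun s => by rw [hgram, add_self_div_two]
  refine convexOn_univ_of_midpoint_le_of_continuous ?_ fun s t => ?_
  · refine Continuous.log (continuous_finsetSum _ fun j _ => ?_).matrix_det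
      fun u => (hpd u).det_pos.ne'
    exact (continuous_const.matrix_mul (continuous_exp_smul Q)).matrix_mul continuous_const
  · have hcs := det_transpose_mul_sq_le (C s) (C t) (hdiag s ▸ hpd s)
    rw [hgram, hdiag, hdiag] at hcs
    have := Real.log_le_log (pow_pos (hpd _).det_pos 2) hcs
    rw [Real.log_pow, Real.log_mul (hpd s).det_pos.ne' (hpd t).det_pos.ne'] at this
    push_cast at this
    linarith

/-- geodesic convexity of the operator-capacity objective.  For
`T(X) = Σⱼ Aⱼ·X·Aⱼᵀ` strictly positive, the function
`t ↦ log det(T(γ(t))) − log det(γ(t))` along the geodesic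
`γ(t) = √P · exp(t·Q) · √P` is convex on `ℝ`. -/
theorem operator_capacity_objective_gconvex (n m : ℕ)
    (A : Fin m → Matrix (Fin n) (Fin n) ℝ)
    (hTpd : ∀ X : Matrix (Fin n) (Fin n) ℝ, X.PosDef →
      (∑ j, A j * X * (A j)ᵀ).PosDef)
    (P Q : Matrix (Fin n) (Fin n) ℝ) (hP : P.PosDef) (hQ : Q.IsSymm) :
    ConvexOn ℝ Set.univ
      (fun t : ℝ =>
        Real.log
          (∑ j, A j * (hP.posSemidef.sqrt * NormedSpace.exp (t • Q) * hP.posSemidef.sqrt)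
              * (A j)ᵀ).det
        - Real.log
            (hP.posSemidef.sqrt * NormedSpace.exp (t • Q) * hP.posSemidef.sqrt).det) := by
  set S := hP.posSemidef.sqrt
  have hS : Sᵀ = S := (isHermitian_iff_isSymm.1 hP.posSemidef.posSemidef_sqrt.1).eq
  have hSunit : IsUnit S := isUnit_of_mul_isUnit_left (hP.posSemidef.sqrt_mul_self ▸ hP.isUnit)
  have hQt : ∀ t : ℝ, (t • Q).IsHermitian := fun t => isHermitian_iff_isSymm.2 (hQ.smul t)
  have hγ : ∀ t : ℝ, (S * NormedSpace.exp (t • Q) * S).PosDef := fun t => by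
    simpa [conjTranspose_eq_transpose_of_trivial, hS] using
      (hQt t).posDef_exp.conjTranspose_mul_mul_same (mulVec_injective_of_isUnit hSunit)
  have hT : ∀ t : ℝ, ∑ j, A j * (S * NormedSpace.exp (t • Q) * S) * (A j)ᵀ
      = ∑ j, (S * (A j)ᵀ)ᵀ * NormedSpace.exp (t • Q) * (S * (A j)ᵀ) := fun t => by
    simp only [transpose_mul, transpose_transpose, hS, Matrix.mul_assoc]
  have hlogγ : ∀ t : ℝ, Real.log (S * NormedSpace.exp (t • Q) * S).det
      = t * Q.trace + Real.log (S.det * S.det) := fun t => by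
    have hdet : S.det * S.det ≠ 0 := mul_self_ne_zero.2 ((isUnit_iff_isUnit_det S).1 hSunit).ne_zero
    rw [det_mul, det_mul, (hQt t).det_exp, mul_right_comm, Real.log_mul hdet (Real.exp_pos _).ne',
      Real.log_exp, trace_smul, smul_eq_mul, add_comm]
  simp_rw [hT, hlogγ]
  exact (convexOn_log_det_sum_transpose_mul_exp_smul_mul _ hQ fun u => hT u ▸ hTpd _ (hγ u)).sub
    (((LinearMap.mulRight ℝ Q.trace).concaveOn convex_univ).add_const _)
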